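/- arXiv:2403.02697 — 6 statements merged into one kernel-verified Lean document; each statement's English description precedes it below -/
import Mathlib

section
/- Let p_in be a probability distribution over input matrices X̃ ∈ ℝ^{(n+1)×d} (whose rows are n training inputs, forming the matrix X, and one test input x_te) that is rotationally symmetric, meaning p_in(X̃) = p_in(X̃Uᵀ) for every orthogonal U ∈ ℝ^{d×d}. Let q(ỹ | X̃) be an observation model giving the joint conditional distribution of labels ỹ = (y, y_te) ∈ ℝ^{n+1}, let 𝓛(ŷ, y) be a loss function, and let ŷ(· | X, y) be a (possibly randomized, with internal randomness Z) rotation-invariant learning algorithm. For orthogonal U define the rotated model q_U(ỹ | X̃) = q(ỹ | X̃Uᵀ), and define the expected loss L_ŷ(q) = E_{X̃∼p_in, ỹ∼q(·|X̃), Z}[𝓛(ŷ(x_te | X, y), y_te)]. Let q̊(ỹ | X̃) = ∫ q_U(ỹ | X̃) dμ(U), where μ is the Haar probability measure on the orthogonal group O(d), and let L_B(q̊) be the infimum over all measurable prediction rules g of E_{X̃∼p_in, ỹ∼q̊(·|X̃)}[𝓛(g(x_te, X, y), y_te)] (the Bayes-optimal expected loss on the symmetrized problem). Then L_ŷ(q)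 ≥ L_B(q̊). -/
/-!
For a fixed value `z` of its internal randomness the algorithm is a measurable prediction rule,
so its risk under `q̊` is at least `L_B(q̊)`; by Tonelli the same holds for the risk averaged
over `z`. It remains to see that the algorithm has the same risk under `q̊` as under `q`.
As `q̊` is the mixture of the models `q_U`, it suffices to do this for each fixed `U`: the
substitution `X̃ ↦ X̃ Uᵀ` preserves `p_in`, and by rotation invariance of the algorithm it also
preserves the expected loss `E_z 𝓛(ŷ(x_te | X, y), y_te)` given `(X̃, ỹ)`.
-/

open MeasureTheory ProbabilityTheory Matrix
open scoped ENNReal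

noncomputable instance matrixMeasurableSpace (m n : Type*) : MeasurableSpace (Matrix m n ℝ) :=
  (inferInstance : MeasurableSpace (m → n → ℝ))

namespace Matrix

variable {l m n : Type*}

theorem measurable_mul [Fintype m] :
    Measurable fun p : Matrix l m ℝ × Matrix m n ℝ => p.1 * p.2 := by
  refine measurable_pi_lambda _ fun i => measurable_pi_lambda _ fun j => ?_
  simp only [Matrix.mul_apply]
  fun_prop

theorem measurable_transpose : Measurable fun A : Matrix m n ℝ => Aᵀ :=
  measurable_pi_lambda _ fun i => measurable_pi_lambda _ fun j =>
    show Measurable fun A : Matrix m n ℝ => A j i by fun_prop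

end Matrix

namespace ProbabilityTheory.Kernel

variable {G X Y Ω : Type*} [MeasurableSpace G] [MeasurableSpace X] [MeasurableSpace Y]
  [MeasurableSpace Ω]

noncomputable def mixComap (κ : Kernel X Y) (ν : Measure G) [SFinite ν] (T : G → X → X)
    (hT : Measurable fun p : G × X => T p.1 p.2) : Kernel X Y where
  toFun x := ν.bind fun g => κ (T g x)
  measurable' := by
    refine Measure.measurable_of_measurable_coe _ fun s hs => ?_
    have hκT : Measurable fun p : X × G => κ (T p.2 p.1) :=
      κ.measurable.comp (hT.comp measurable_swap)
    have hbind (x : X) : (ν.bind fun g => κ (T g x)) s = ∫⁻ g, κ (T g x) s ∂ν :=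
      Measure.bind_apply hs (hκT.comp measurable_prodMk_left).aemeasurable
    simp_rw [hbind]
    exact ((Measure.measurable_coe hs).comp hκT).lintegral_prod_right'

variable {κ : Kernel X Y} {ν : Measure G} [SFinite ν] {T : G → X → X}
  {hT : Measurable fun p : G × X => T p.1 p.2}

theorem lintegral_mixComap {f : Y → ℝ≥0∞} (hf : Measurable f) (x : X) :
    ∫⁻ y, f y ∂mixComap κ ν T hT x = ∫⁻ g, ∫⁻ y, f y ∂κ (T g x) ∂ν :=
  Measure.lintegral_bind
    (κ.measurable.comp (hT.comp (measurable_id.prodMk measurable_const))).aemeasurable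
    hf.aemeasurable

instance [IsMarkovKernel κ] [IsProbabilityMeasure ν] : IsMarkovKernel (mixComap κ ν T hT) :=
  ⟨fun x => ⟨by simpa using lintegral_mixComap (κ := κ) (ν := ν) (hT := hT) measurable_one x⟩⟩

theorem lintegral_lintegral_comap_of_invariant [IsSFiniteKernel κ] (μ : Measure X) {S : X → X}
    (hS : Measurable S) (hμ : μ.map S = μ) {F : X → Y → ℝ≥0∞}
    (hF : Measurable fun p : X × Y => F p.1 p.2) (hFS : ∀ x, F (S x) = F x) :
    ∫⁻ x, ∫⁻ y, F x y ∂κ (S x) ∂μ = ∫⁻ x, ∫⁻ y, F x y ∂κ x ∂μ := by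
  have hrisk : Measurable fun x => ∫⁻ y, F x y ∂κ x := hF.lintegral_kernel_prod_right'
  calc ∫⁻ x, ∫⁻ y, F x y ∂κ (S x) ∂μ = ∫⁻ x, ∫⁻ y, F (S x) y ∂κ (S x) ∂μ := by simp_rw [hFS]
    _ = ∫⁻ x, ∫⁻ y, F x y ∂κ x ∂μ := by rw [← MeasureTheory.lintegral_map hrisk hS, hμ]

theorem lintegral_lintegral_mixComap_of_invariant [IsSFiniteKernel κ] [IsProbabilityMeasure ν]
    (μ : Measure X) [SFinite μ] (hμ : ∀ g, μ.map (T g) = μ) {F : X → Y → ℝ≥0∞}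
    (hF : Measurable fun p : X × Y => F p.1 p.2) (hFT : ∀ g x, F (T g x) = F x) :
    ∫⁻ x, ∫⁻ y, F x y ∂mixComap κ ν T hT x ∂μ = ∫⁻ x, ∫⁻ y, F x y ∂κ x ∂μ := by
  have hF' : Measurable fun q : (X × G) × Y => F q.1.1 q.2 :=
    hF.comp (measurable_fst.fst.prodMk measurable_snd)
  have hrisk : Measurable fun q : X × G => ∫⁻ y, F q.1 y ∂κ (T q.2 q.1) :=
    hF'.lintegral_kernel_prod_right' (κ := κ.comap _ (hT.comp measurable_swap))
  calc ∫⁻ x, ∫⁻ y, F x y ∂mixComap κ ν T hT x ∂μ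
      = ∫⁻ x, ∫⁻ g, ∫⁻ y, F x y ∂κ (T g x) ∂ν ∂μ :=
        lintegral_congr fun x => lintegral_mixComap (hF.comp measurable_prodMk_left) x
    _ = ∫⁻ g, ∫⁻ x, ∫⁻ y, F x y ∂κ (T g x) ∂μ ∂ν :=
        MeasureTheory.lintegral_lintegral_swap hrisk.aemeasurable
    _ = ∫⁻ _g, ∫⁻ x, ∫⁻ y, F x y ∂κ x ∂μ ∂ν := lintegral_congr fun g =>
        lintegral_lintegral_comap_of_invariant μ (hT.comp measurable_prodMk_left) (hμ g) hF (hFT g)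
    _ = ∫⁻ x, ∫⁻ y, F x y ∂κ x ∂μ := by simp

theorem lintegral_lintegral_lintegral_swap [IsSFiniteKernel κ] (μ : Measure X) [SFinite μ]
    (ρ : Measure Ω) [SFinite ρ] {f : X → Y → Ω → ℝ≥0∞}
    (hf : Measurable fun t : (X × Y) × Ω => f t.1.1 t.1.2 t.2) :
    ∫⁻ z, ∫⁻ x, ∫⁻ y, f x y z ∂κ x ∂μ ∂ρ = ∫⁻ x, ∫⁻ y, ∫⁻ z, f x y z ∂ρ ∂κ x ∂μ := by
  have hf' : Measurable fun t : Ω × X × Y => f t.2.1 t.2.2 t.1 :=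
    hf.comp (measurable_snd.prodMk measurable_fst)
  calc ∫⁻ z, ∫⁻ x, ∫⁻ y, f x y z ∂κ x ∂μ ∂ρ = ∫⁻ z, ∫⁻ t, f t.1 t.2 z ∂(μ ⊗ₘ κ) ∂ρ :=
        lintegral_congr fun z =>
          (Measure.lintegral_compProd (hf'.comp measurable_prodMk_left)).symm
    _ = ∫⁻ t, ∫⁻ z, f t.1 t.2 z ∂ρ ∂(μ ⊗ₘ κ) :=
        MeasureTheory.lintegral_lintegral_swap hf'.aemeasurable
    _ = ∫⁻ x, ∫⁻ y, ∫⁻ z, f x y z ∂ρ ∂κ x ∂μ :=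
        Measure.lintegral_compProd hf.lintegral_prod_right'

end ProbabilityTheory.Kernel

section TestLoss

variable {n d : ℕ} {Ω : Type*} [MeasurableSpace Ω] {loss : ℝ → ℝ → ℝ}

noncomputable def testLoss (loss : ℝ → ℝ → ℝ)
    (g : (Fin d → ℝ) → Matrix (Fin n) (Fin d) ℝ → (Fin n → ℝ) → ℝ)
    (Xt : Matrix (Fin (n + 1)) (Fin d) ℝ) (yt : Fin (n + 1) → ℝ) : ℝ≥0∞ :=
  ENNReal.ofReal (loss (g (fun j => Xt (Fin.last n) j) (Matrix.of fun i j => Xt i.castSucc j)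
    (fun i => yt i.castSucc)) (yt (Fin.last n)))

theorem measurable_testLoss (hloss : Measurable fun p : ℝ × ℝ => loss p.1 p.2)
    {pred : (Fin d → ℝ) → Matrix (Fin n) (Fin d) ℝ → (Fin n → ℝ) → Ω → ℝ}
    (hpred : Measurable fun p : (Fin d → ℝ) × Matrix (Fin n) (Fin d) ℝ × (Fin n → ℝ) × Ω =>
      pred p.1 p.2.1 p.2.2.1 p.2.2.2) :
    Measurable fun t : (Matrix (Fin (n + 1)) (Fin d) ℝ × (Fin (n + 1) → ℝ)) × Ω =>
      testLoss loss (fun x X y => pred x X y t.2) t.1.1 t.1.2 := by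
  have htest : Measurable fun Xt : Matrix (Fin (n + 1)) (Fin d) ℝ => fun j => Xt (Fin.last n) j :=
    measurable_pi_apply _
  have htrain : Measurable fun Xt : Matrix (Fin (n + 1)) (Fin d) ℝ =>
      Matrix.of fun (i : Fin n) j => Xt i.castSucc j :=
    measurable_pi_lambda _ fun i => measurable_pi_apply _
  have hlabels : Measurable fun yt : Fin (n + 1) → ℝ => fun i : Fin n => yt i.castSucc :=
    measurable_pi_lambda _ fun i => measurable_pi_apply _
  refine ENNReal.measurable_ofReal.comp (hloss.comp (Measurable.prodMk ?_ ?_))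
  · exact hpred.comp ((htest.comp measurable_fst.fst).prodMk
      ((htrain.comp measurable_fst.fst).prodMk
        ((hlabels.comp measurable_fst.snd).prodMk measurable_snd)))
  · exact (measurable_pi_apply _).comp measurable_fst.snd

theorem testLoss_mul_transpose (g : (Fin d → ℝ) → Matrix (Fin n) (Fin d) ℝ → (Fin n → ℝ) → ℝ)
    (U : Matrix (Fin d) (Fin d) ℝ) (Xt : Matrix (Fin (n + 1)) (Fin d) ℝ)
    (yt : Fin (n + 1) → ℝ) :
    testLoss loss g (Xt * Uᵀ) yt = testLoss loss (fun x X y => g (U *ᵥ x) (X * Uᵀ) y) Xt yt := by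
  have htest : (fun j => (Xt * Uᵀ) (Fin.last n) j) = U *ᵥ fun j => Xt (Fin.last n) j :=
    (mul_apply_eq_vecMul _ _ _).trans (vecMul_transpose _ _)
  simp only [testLoss, htest]
  rfl

theorem lintegral_testLoss_mul_transpose (hloss : Measurable fun p : ℝ × ℝ => loss p.1 p.2)
    {μZ : Measure Ω} {pred : (Fin d → ℝ) → Matrix (Fin n) (Fin d) ℝ → (Fin n → ℝ) → Ω → ℝ}
    (hpred : Measurable fun p : (Fin d → ℝ) × Matrix (Fin n) (Fin d) ℝ × (Fin n → ℝ) × Ω =>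
      pred p.1 p.2.1 p.2.2.1 p.2.2.2)
    {U : Matrix (Fin d) (Fin d) ℝ}
    (hU : ∀ x X y, Measure.map (fun z => pred (U *ᵥ x) (X * Uᵀ) y z) μZ =
      Measure.map (fun z => pred x X y z) μZ)
    (Xt : Matrix (Fin (n + 1)) (Fin d) ℝ) (yt : Fin (n + 1) → ℝ) :
    ∫⁻ z, testLoss loss (fun x X y => pred x X y z) (Xt * Uᵀ) yt ∂μZ =
      ∫⁻ z, testLoss loss (fun x X y => pred x X y z) Xt yt ∂μZ := by
  have hpred_at (x X y) : Measurable fun z => pred x X y z :=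
    hpred.comp (measurable_const.prodMk (measurable_const.prodMk (measurable_const.prodMk
      measurable_id)))
  have hloss_at : Measurable fun t => ENNReal.ofReal (loss t (yt (Fin.last n))) := by
    fun_prop
  simp only [testLoss_mul_transpose]
  exact (IdentDistrib.comp ⟨(hpred_at ..).aemeasurable, (hpred_at ..).aemeasurable, hU ..⟩
    hloss_at).lintegral_eq

end TestLoss

theorem rotation_invariant_bayes_lower_bound_general (n d : ℕ)
    (pIn : Measure (Matrix (Fin (n + 1)) (Fin d) ℝ)) [IsProbabilityMeasure pIn]
    (hsym : ∀ U ∈ Matrix.orthogonalGroup (Fin d) ℝ,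
      Measure.map (fun Xt => Xt * Uᵀ) pIn = pIn)
    (q : Matrix (Fin (n + 1)) (Fin d) ℝ → Measure (Fin (n + 1) → ℝ))
    (hqprob : ∀ Xt, IsProbabilityMeasure (q Xt)) (hqmeas : Measurable q)
    (loss : ℝ → ℝ → ℝ) (hloss : Measurable fun p : ℝ × ℝ => loss p.1 p.2)
    (μH : Measure ↥(Matrix.orthogonalGroup (Fin d) ℝ)) [IsProbabilityMeasure μH]
    {Ω : Type*} [MeasurableSpace Ω] (μZ : Measure Ω) [IsProbabilityMeasure μZ]
    (pred : (Fin d → ℝ) → Matrix (Fin n) (Fin d) ℝ → (Fin n → ℝ) → Ω → ℝ)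
    (hmeas : Measurable fun p :
        (Fin d → ℝ) × Matrix (Fin n) (Fin d) ℝ × (Fin n → ℝ) × Ω =>
      pred p.1 p.2.1 p.2.2.1 p.2.2.2)
    (hinv : ∀ U ∈ Matrix.orthogonalGroup (Fin d) ℝ,
      ∀ (x : Fin d → ℝ) (X : Matrix (Fin n) (Fin d) ℝ) (y : Fin n → ℝ),
        Measure.map (fun z => pred (U *ᵥ x) (X * Uᵀ) y z) μZ =
          Measure.map (fun z => pred x X y z) μZ) :
    let trainX : Matrix (Fin (n + 1)) (Fin d) ℝ → Matrix (Fin n) (Fin d) ℝ := fun Xt =>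
      Matrix.of fun (i : Fin n) (j : Fin d) => Xt i.castSucc j
    let qRing : Matrix (Fin (n + 1)) (Fin d) ℝ → Measure (Fin (n + 1) → ℝ) := fun Xt =>
      μH.bind fun U => q (Xt * ((U : Matrix (Fin d) (Fin d) ℝ))ᵀ)
    let Lalg : ℝ≥0∞ := ∫⁻ Xt, (∫⁻ yt, (∫⁻ z, ENNReal.ofReal
        (loss (pred (fun j => Xt (Fin.last n) j) (trainX Xt)
          (fun i : Fin n => yt i.castSucc) z) (yt (Fin.last n))) ∂μZ) ∂(q Xt)) ∂pIn
    let LBayes : ℝ≥0∞ :=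
      ⨅ (g : (Fin d → ℝ) → Matrix (Fin n) (Fin d) ℝ → (Fin n → ℝ) → ℝ)
        (_ : Measurable fun p : (Fin d → ℝ) × Matrix (Fin n) (Fin d) ℝ × (Fin n → ℝ) =>
          g p.1 p.2.1 p.2.2),
      ∫⁻ Xt, (∫⁻ yt, ENNReal.ofReal
        (loss (g (fun j => Xt (Fin.last n) j) (trainX Xt) (fun i : Fin n => yt i.castSucc))
          (yt (Fin.last n))) ∂(qRing Xt)) ∂pIn
    LBayes ≤ Lalg := by
  intro trainX qRing Lalg LBayes
  let κ : Kernel (Matrix (Fin (n + 1)) (Fin d) ℝ) (Fin (n + 1) → ℝ) := ⟨q, hqmeas⟩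
  have : IsMarkovKernel κ := ⟨hqprob⟩
  have hrot : Measurable fun p :
      ↥(orthogonalGroup (Fin d) ℝ) × Matrix (Fin (n + 1)) (Fin d) ℝ =>
        p.2 * ((p.1 : Matrix (Fin d) (Fin d) ℝ))ᵀ :=
    Matrix.measurable_mul.comp (measurable_snd.prodMk
      (Matrix.measurable_transpose.comp (measurable_subtype_coe.comp measurable_fst)))
  let qMix := κ.mixComap μH (fun U Xt => Xt * ((U : Matrix (Fin d) (Fin d) ℝ))ᵀ) hrot
  have : IsMarkovKernel qMix := by infer_instance
  have hpred_at (z : Ω) : Measurable fun p :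
      (Fin d → ℝ) × Matrix (Fin n) (Fin d) ℝ × (Fin n → ℝ) => pred p.1 p.2.1 p.2.2 z :=
    hmeas.comp (measurable_fst.prodMk (measurable_snd.fst.prodMk
      (measurable_snd.snd.prodMk measurable_const)))
  have hrisk := measurable_testLoss hloss hmeas
  calc LBayes
      ≤ ⨅ z, ∫⁻ Xt, ∫⁻ yt, testLoss loss (fun x X y => pred x X y z) Xt yt ∂qMix Xt ∂pIn :=
        le_iInf fun z => iInf₂_le (fun x X y => pred x X y z) (hpred_at z)
    _ ≤ ∫⁻ z, ∫⁻ Xt, ∫⁻ yt, testLoss loss (fun x X y => pred x X y z) Xt yt ∂qMix Xt ∂pIn ∂μZ :=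
        iInf_le_lintegral _
    _ = ∫⁻ Xt, ∫⁻ yt, ∫⁻ z, testLoss loss (fun x X y => pred x X y z) Xt yt ∂μZ ∂qMix Xt ∂pIn :=
        Kernel.lintegral_lintegral_lintegral_swap pIn μZ hrisk
    _ = Lalg :=
        Kernel.lintegral_lintegral_mixComap_of_invariant pIn (fun U => hsym _ U.2)
          hrisk.lintegral_prod_right' fun (U : orthogonalGroup (Fin d) ℝ) Xt =>
            funext (lintegral_testLoss_mul_transpose hloss hmeas (hinv _ U.2) Xt)

/-- **The Bayes risk of the rotation-symmetrized problem lower-bounds any rotation-invariant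
algorithm** (Theorem 1 of the paper).  Let `p_in` be a rotationally symmetric probability
distribution over input matrices `X̃ ∈ ℝ^{(n+1)×d}` (rows: `n` training inputs `X` and one
test input `x_te`), `q(ỹ | X̃)` an observation model over `ỹ = (y, y_te) ∈ ℝ^{n+1}`,
`𝓛 ≥ 0` a loss function, and `pred` a (possibly randomized, internal randomness `z ∼ μZ`)
rotation-invariant learning algorithm.  For orthogonal `U` let `q_U(ỹ|X̃) = q(ỹ|X̃Uᵀ)` and
let `q̊(ỹ|X̃) = ∫ q_U(ỹ|X̃) dμH(U)` be the mixture over a Haar-distributed `U` (formalized: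
`μH` is a probability measure on the orthogonal group invariant under left and right
translations).  Let `L(q')` denote the expected loss of the algorithm under observation model
`q'`, and let `L_B(q̊)` be the infimum over all measurable prediction rules `g` of the
expected loss of `g` under `q̊` (the Bayes-optimal expected loss on the symmetrized problem).
Then `L(q) ≥ L_B(q̊)`. -/
theorem rotation_invariant_bayes_lower_bound (n d : ℕ)
    (pIn : Measure (Matrix (Fin (n + 1)) (Fin d) ℝ)) [IsProbabilityMeasure pIn]
    (hsym : ∀ U ∈ Matrix.orthogonalGroup (Fin d) ℝ,
      Measure.map (fun Xt => Xt * Uᵀ) pIn = pIn)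
    (q : Matrix (Fin (n + 1)) (Fin d) ℝ → Measure (Fin (n + 1) → ℝ))
    (hqprob : ∀ Xt, IsProbabilityMeasure (q Xt)) (hqmeas : Measurable q)
    (loss : ℝ → ℝ → ℝ) (hloss : Measurable fun p : ℝ × ℝ => loss p.1 p.2)
    (hloss_nonneg : ∀ a b, 0 ≤ loss a b)
    (μH : Measure ↥(Matrix.orthogonalGroup (Fin d) ℝ)) [IsProbabilityMeasure μH]
    (hHaarR : ∀ U : ↥(Matrix.orthogonalGroup (Fin d) ℝ),
      Measure.map (fun W => W * U) μH = μH)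
    (hHaarL : ∀ U : ↥(Matrix.orthogonalGroup (Fin d) ℝ),
      Measure.map (fun W => U * W) μH = μH)
    {Ω : Type*} [MeasurableSpace Ω] (μZ : Measure Ω) [IsProbabilityMeasure μZ]
    (pred : (Fin d → ℝ) → Matrix (Fin n) (Fin d) ℝ → (Fin n → ℝ) → Ω → ℝ)
    (hmeas : Measurable fun p :
        (Fin d → ℝ) × Matrix (Fin n) (Fin d) ℝ × (Fin n → ℝ) × Ω =>
      pred p.1 p.2.1 p.2.2.1 p.2.2.2)
    (hinv : ∀ U ∈ Matrix.orthogonalGroup (Fin d) ℝ,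
      ∀ (x : Fin d → ℝ) (X : Matrix (Fin n) (Fin d) ℝ) (y : Fin n → ℝ),
        Measure.map (fun z => pred (U *ᵥ x) (X * Uᵀ) y z) μZ =
          Measure.map (fun z => pred x X y z) μZ) :
    let trainX : Matrix (Fin (n + 1)) (Fin d) ℝ → Matrix (Fin n) (Fin d) ℝ := fun Xt =>
      Matrix.of fun (i : Fin n) (j : Fin d) => Xt i.castSucc j
    let qRing : Matrix (Fin (n + 1)) (Fin d) ℝ → Measure (Fin (n + 1) → ℝ) := fun Xt =>
      μH.bind fun U => q (Xt * ((U : Matrix (Fin d) (Fin d) ℝ))ᵀ)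
    let Lalg : ℝ≥0∞ := ∫⁻ Xt, (∫⁻ yt, (∫⁻ z, ENNReal.ofReal
        (loss (pred (fun j => Xt (Fin.last n) j) (trainX Xt)
          (fun i : Fin n => yt i.castSucc) z) (yt (Fin.last n))) ∂μZ) ∂(q Xt)) ∂pIn
    let LBayes : ℝ≥0∞ :=
      ⨅ (g : (Fin d → ℝ) → Matrix (Fin n) (Fin d) ℝ → (Fin n → ℝ) → ℝ)
        (_ : Measurable fun p : (Fin d → ℝ) × Matrix (Fin n) (Fin d) ℝ × (Fin n → ℝ) =>
          g p.1 p.2.1 p.2.2),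
      ∫⁻ Xt, (∫⁻ yt, ENNReal.ofReal
        (loss (g (fun j => Xt (Fin.last n) j) (trainX Xt) (fun i : Fin n => yt i.castSucc))
          (yt (Fin.last n))) ∂(qRing Xt)) ∂pIn
    LBayes ≤ Lalg :=
  rotation_invariant_bayes_lower_bound_general n d pIn hsym q hqprob hqmeas loss hloss μH μZ pred
    hmeas hinv
end

section
/- Consider the Bayesian model in which the target weight vector w is drawn uniformly from the unit sphere S^{d−1} ⊂ ℝ^d, the input matrix is X ∈ ℝ^{md×d} consisting of m stacked copies of H = √d·V for an orthogonal matrix V ∈ ℝ^{d×d} (so that XᵀX = md·I_d), and the labels are y = X w + ξ with ξ ∼ N(0, σ²·I_{md}). Let ŵ_RR = (XᵀX + σ²d·I_d)⁻¹ Xᵀ y be the ridge regression estimator. Then E_{w,ξ}[‖ŵ_RR − w‖²] = σ²/(m + σ²). -/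
/-!
Because `XᵀX = md • 1`, the ridge estimator is an explicit shrinkage:
`ŵ - w = -(σ²/(m + σ²)) • w + (md + σ²d)⁻¹ • Xᵀξ`. The prior and the noise are independent
and the noise is centred, so the cross term integrates to zero and the risk is the sum of the
bias `(σ²/(m + σ²))² E‖w‖² = (σ²/(m + σ²))²` and the noise term
`σ² tr(XᵀX)/(md + σ²d)² = σ² m/(m + σ²)²`, which add up to `σ²/(m + σ²)`.
-/

open MeasureTheory ProbabilityTheory Matrix

section IidNoise

variable {κ : Type*} [Fintype κ] {ν : Measure ℝ} [IsProbabilityMeasure ν]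

lemma memLp_dotProduct_pi (hν : MemLp id 2 ν) (a : κ → ℝ) :
    MemLp (fun ξ => a ⬝ᵥ ξ) 2 (Measure.pi fun _ => ν) :=
  memLp_finsetSum _ fun q _ =>
    (hν.comp_measurePreserving (measurePreserving_eval _ q)).const_mul (a q)

lemma integral_dotProduct_pi (hν : Integrable id ν) (h0 : ∫ x, x ∂ν = 0) (a : κ → ℝ) :
    ∫ ξ, a ⬝ᵥ ξ ∂(Measure.pi fun _ => ν) = 0 := by
  simp only [dotProduct]
  rw [integral_finsetSum _ fun q _ => (integrable_eval hν).const_mul (a q)]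
  refine Finset.sum_eq_zero fun q _ => ?_
  have h := integral_comp_eval (μ := fun _ : κ => ν) (i := q) (f := fun x => x)
    aestronglyMeasurable_id
  rw [integral_const_mul, h, h0, mul_zero]

lemma integral_dotProduct_sq_pi (hν : MemLp id 2 ν) (h0 : ∫ x, x ∂ν = 0) (a : κ → ℝ) :
    ∫ ξ, (a ⬝ᵥ ξ) ^ 2 ∂(Measure.pi fun _ => ν) = Var[id; ν] * ∑ q, a q ^ 2 := by
  have hvar := variance_sum_pi (μ := fun _ : κ => ν) (X := fun q x => a q * x)
    fun q => hν.const_mul (a q)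
  have hsum : (∑ q, fun ξ : κ → ℝ => a q * ξ q) = fun ξ => a ⬝ᵥ ξ := by
    ext ξ; simp [dotProduct]
  rw [hsum, variance_of_integral_eq_zero (memLp_dotProduct_pi hν a).aemeasurable
    (integral_dotProduct_pi (hν.integrable one_le_two) h0 a)] at hvar
  rw [hvar, Finset.mul_sum]
  refine Finset.sum_congr rfl fun q _ => ?_
  rw [variance_const_mul]
  exact mul_comm _ _

lemma integral_sum_sq_mulVec_pi {ι : Type*} [Fintype ι] (hν : MemLp id 2 ν)
    (h0 : ∫ x, x ∂ν = 0) (A : Matrix ι κ ℝ) :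
    ∫ ξ, ∑ i, (A *ᵥ ξ) i ^ 2 ∂(Measure.pi fun _ => ν) = Var[id; ν] * (A * Aᵀ).trace := by
  simp only [mulVec]
  rw [integral_finsetSum _ fun i _ => (memLp_dotProduct_pi hν (A i)).integrable_sq]
  simp only [integral_dotProduct_sq_pi hν h0, ← Finset.mul_sum]
  simp only [trace, diag, mul_apply, transpose_apply, sq]

end IidNoise

section IndependentSum

variable {α β : Type*} [MeasurableSpace α] [MeasurableSpace β] {μ : Measure α} {ν : Measure β}
  [IsProbabilityMeasure μ] [IsProbabilityMeasure ν]

lemma integral_add_sq_prod_of_integral_eq_zero {f : α → ℝ} {g : β → ℝ} (hf : MemLp f 2 μ)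
    (hg : MemLp g 2 ν) (hg0 : ∫ b, g b ∂ν = 0) :
    ∫ p, (f p.1 + g p.2) ^ 2 ∂(μ.prod ν) = ∫ a, f a ^ 2 ∂μ + ∫ b, g b ^ 2 ∂ν := by
  have hf' : MemLp (fun p : α × β => f p.1) 2 (μ.prod ν) :=
    hf.comp_measurePreserving measurePreserving_fst
  have hg' : MemLp (fun p : α × β => g p.2) 2 (μ.prod ν) :=
    hg.comp_measurePreserving measurePreserving_snd
  have hcross_int : Integrable (fun p : α × β => 2 * (f p.1 * g p.2)) (μ.prod ν) :=
    (hf'.integrable_mul hg').const_mul 2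
  have hcross : ∫ p, 2 * (f p.1 * g p.2) ∂(μ.prod ν) = 0 := by
    rw [integral_const_mul, integral_prod_mul, hg0, mul_zero, mul_zero]
  simp_rw [add_sq, mul_assoc]
  rw [integral_add ?_ hg'.integrable_sq, integral_add hf'.integrable_sq hcross_int, hcross,
    integral_fun_fst (fun a => f a ^ 2), integral_fun_snd (fun b => g b ^ 2)]
  · simp
  · exact hf'.integrable_sq.add hcross_int

lemma integral_sum_add_sq_prod_of_integral_eq_zero {ι : Type*} [Fintype ι] {f : α → ι → ℝ}
    {g : β → ι → ℝ} (hf : ∀ i, MemLp (f · i) 2 μ) (hg : ∀ i, MemLp (g · i) 2 ν)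
    (hg0 : ∀ i, ∫ b, g b i ∂ν = 0) :
    ∫ p, ∑ i, (f p.1 i + g p.2 i) ^ 2 ∂(μ.prod ν)
      = ∫ a, ∑ i, f a i ^ 2 ∂μ + ∫ b, ∑ i, g b i ^ 2 ∂ν := by
  have hfg : ∀ i, MemLp (fun p : α × β => f p.1 i + g p.2 i) 2 (μ.prod ν) := fun i =>
    ((hf i).comp_measurePreserving measurePreserving_fst).add
      ((hg i).comp_measurePreserving measurePreserving_snd)
  rw [integral_finsetSum _ fun i _ => (hfg i).integrable_sq,
    integral_finsetSum _ fun i _ => (hf i).integrable_sq,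
    integral_finsetSum _ fun i _ => (hg i).integrable_sq, ← Finset.sum_add_distrib]
  exact Finset.sum_congr rfl fun i _ =>
    integral_add_sq_prod_of_integral_eq_zero (hf i) (hg i) (hg0 i)

end IndependentSum

lemma memLp_eval_of_ae_sum_sq_eq_one {ι : Type*} [Fintype ι] {μ : Measure (ι → ℝ)}
    [IsFiniteMeasure μ] (h : ∀ᵐ w ∂μ, ∑ i, w i ^ 2 = 1) (i : ι) :
    MemLp (fun w => w i) 2 μ := by
  refine MemLp.of_bound (measurable_pi_apply i).aestronglyMeasurable 1 ?_
  filter_upwards [h] with w hw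
  rw [Real.norm_eq_abs, ← sq_le_one_iff_abs_le_one, ← hw]
  exact Finset.single_le_sum (fun j _ => sq_nonneg (w j)) (Finset.mem_univ i)

lemma sum_comp_modNat {M : Type*} [AddCommMonoid M] {m n : ℕ} (f : Fin n → M) :
    ∑ p : Fin (m * n), f p.modNat = m • ∑ k, f k := by
  have hmod : ∀ x : Fin m × Fin n, (finProdFinEquiv x).modNat = x.2 := fun x =>
    congrArg Prod.snd (finProdFinEquiv.symm_apply_apply x)
  simp only [← finProdFinEquiv.sum_comp, hmod, Fintype.sum_prod_type, Finset.sum_const,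
    Finset.card_univ, Fintype.card_fin]

lemma transpose_mul_self_submatrix_modNat {R : Type*} [CommSemiring R] {ι : Type*} [Fintype ι]
    {m n : ℕ} (A : Matrix (Fin n) ι R) :
    (A.submatrix (Fin.modNat (m := m)) id)ᵀ * A.submatrix Fin.modNat id = m • (Aᵀ * A) := by
  ext i j
  simp only [mul_apply, transpose_apply, Matrix.smul_apply]
  exact sum_comp_modNat (fun k => A k i * A k j)

lemma ridge_mulVec_sub {K : Type*} [Field K] {ι κ : Type*} [Fintype ι] [DecidableEq ι]
    [Fintype κ] {X : Matrix κ ι K} {s l : K} (hX : Xᵀ * X = s • 1) (hsl : s + l ≠ 0)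
    (w : ι → K) (ξ : κ → K) :
    ((Xᵀ * X + l • 1)⁻¹ * Xᵀ) *ᵥ (X *ᵥ w + ξ) - w
      = (-(l / (s + l))) • w + ((s + l)⁻¹ • Xᵀ) *ᵥ ξ := by
  have hinv : ((s + l) • (1 : Matrix ι ι K))⁻¹ = (s + l)⁻¹ • 1 :=
    inv_eq_left_inv (by rw [smul_mul_smul_comm, one_mul, inv_mul_cancel₀ hsl, one_smul])
  rw [hX, ← add_smul, hinv, smul_mul, Matrix.one_mul, mulVec_add, smul_mulVec, smul_mulVec,
    mulVec_mulVec, hX, smul_mulVec, one_mulVec]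
  ext i
  simp only [Pi.sub_apply, Pi.add_apply, Pi.smul_apply, smul_eq_mul]
  field_simp
  ring

theorem integral_sum_sq_ridge_sub {ι κ : Type*} [Fintype ι] [DecidableEq ι] [Fintype κ]
    {X : Matrix κ ι ℝ} {s l : ℝ} (hX : Xᵀ * X = s • 1) (hsl : s + l ≠ 0)
    {μ : Measure (ι → ℝ)} [IsProbabilityMeasure μ] (hμ : ∀ i, MemLp (fun w => w i) 2 μ)
    {ν : Measure ℝ} [IsProbabilityMeasure ν] (hν : MemLp id 2 ν) (h0 : ∫ x, x ∂ν = 0) :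
    ∫ p, ∑ i, ((((Xᵀ * X + l • 1)⁻¹ * Xᵀ) *ᵥ (X *ᵥ p.1 + p.2)) i - p.1 i) ^ 2
        ∂(μ.prod (Measure.pi fun _ => ν))
      = (l / (s + l)) ^ 2 * ∫ w, ∑ i, w i ^ 2 ∂μ
        + Var[id; ν] * s * Fintype.card ι / (s + l) ^ 2 := by
  set B := (s + l)⁻¹ • Xᵀ with hB
  have herr : ∀ (p : (ι → ℝ) × (κ → ℝ)) (i : ι),
      (((Xᵀ * X + l • 1)⁻¹ * Xᵀ) *ᵥ (X *ᵥ p.1 + p.2)) i - p.1 i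
        = -(l / (s + l)) * p.1 i + (B *ᵥ p.2) i := fun p i => by
    simpa using congrFun (ridge_mulVec_sub hX hsl p.1 p.2) i
  have hBBt : B * Bᵀ = ((s + l)⁻¹ ^ 2 * s) • 1 := by
    rw [hB, transpose_smul, transpose_transpose, Matrix.smul_mul, Matrix.mul_smul, hX, smul_smul,
      smul_smul, sq]
  simp_rw [herr]
  rw [integral_sum_add_sq_prod_of_integral_eq_zero (g := fun ξ => B *ᵥ ξ)
    (fun i => (hμ i).const_mul _) (fun i => memLp_dotProduct_pi hν (B i))
    (fun i => integral_dotProduct_pi (hν.integrable one_le_two) h0 (B i)),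
    integral_sum_sq_mulVec_pi hν h0, hBBt]
  simp_rw [mul_pow, neg_sq, ← Finset.mul_sum, integral_const_mul]
  rw [trace_smul, trace_one, smul_eq_mul]
  field_simp

theorem ridge_regression_exact_risk_general (d m : ℕ) (hd : 0 < d) (hm : 0 < m) (σ : NNReal)
    (V : Matrix (Fin d) (Fin d) ℝ) (hV : V ∈ Matrix.orthogonalGroup (Fin d) ℝ)
    (μw : Measure (Fin d → ℝ)) [IsProbabilityMeasure μw]
    (hsphere : μw {w | ∑ i, (w i) ^ 2 = 1} = 1) :
    let X : Matrix (Fin (m * d)) (Fin d) ℝ :=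
      Matrix.of fun (p : Fin (m * d)) (j : Fin d) =>
        Real.sqrt d * V ⟨(p : ℕ) % d, Nat.mod_lt _ hd⟩ j
    let μξ : Measure (Fin (m * d) → ℝ) := Measure.pi fun _ => gaussianReal 0 (σ ^ 2)
    let wRR : (Fin d → ℝ) × (Fin (m * d) → ℝ) → Fin d → ℝ := fun p =>
      ((Xᵀ * X + ((σ : ℝ) ^ 2 * d) • (1 : Matrix (Fin d) (Fin d) ℝ))⁻¹ * Xᵀ) *ᵥ
        (X *ᵥ p.1 + p.2)
    (∫ p, (∑ i, (wRR p i - p.1 i) ^ 2) ∂(μw.prod μξ)) = (σ : ℝ) ^ 2 / (m + (σ : ℝ) ^ 2) := by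
  intro X μξ wRR
  have hd' : (0 : ℝ) < d := by exact_mod_cast hd
  have hm' : (0 : ℝ) < m := by exact_mod_cast hm
  have hX : X = (Real.sqrt d • V).submatrix Fin.modNat id := rfl
  have hgram : Xᵀ * X = ((m : ℝ) * d) • 1 := by
    rw [hX]
    refine (transpose_mul_self_submatrix_modNat _).trans ?_
    rw [transpose_smul, Matrix.smul_mul, Matrix.mul_smul, smul_smul, Real.mul_self_sqrt hd'.le,
      (mem_orthogonalGroup_iff' _ _).1 hV, ← Nat.cast_smul_eq_nsmul ℝ, smul_smul]
  have hw : ∀ᵐ w ∂μw, ∑ i, w i ^ 2 = 1 :=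
    (ae_iff_measure_eq (measurableSet_eq_fun (by fun_prop) measurable_const).nullMeasurableSet).2
      (by rw [hsphere, measure_univ])
  rw [integral_sum_sq_ridge_sub hgram (by positivity) (memLp_eval_of_ae_sum_sq_eq_one hw)
    (memLp_id_gaussianReal 2) integral_id_gaussianReal, integral_congr_ae hw,
    variance_id_gaussianReal]
  simp only [integral_const, probReal_univ, smul_eq_mul, mul_one, NNReal.coe_pow,
    Fintype.card_fin]
  field_simp
  ring

/-- **Exact Bayes risk of ridge regression under the uniform-sphere prior.**
Let the target `w` be drawn uniformly from the unit sphere `S^{d-1}` (formalized as: a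
probability measure supported on the unit sphere and invariant under every orthogonal
rotation), let `X ∈ ℝ^{md×d}` consist of `m` stacked copies of `H = √d·V` for an orthogonal
`V` (so `XᵀX = md·I`), and let `y = X w + ξ` with `ξ ∼ N(0, σ² I_{md})`.  Then the ridge
regression estimator `ŵ_RR = (XᵀX + σ²d·I)⁻¹ Xᵀ y` satisfies
`E_{w,ξ}[‖ŵ_RR - w‖²] = σ²/(m + σ²)`. -/
theorem ridge_regression_exact_risk (d m : ℕ) (hd : 0 < d) (hm : 0 < m) (σ : NNReal)
    (V : Matrix (Fin d) (Fin d) ℝ) (hV : V ∈ Matrix.orthogonalGroup (Fin d) ℝ)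
    (μw : Measure (Fin d → ℝ)) [IsProbabilityMeasure μw]
    (hsphere : μw {w | ∑ i, (w i) ^ 2 = 1} = 1)
    (hrot : ∀ U ∈ Matrix.orthogonalGroup (Fin d) ℝ,
      Measure.map (fun w => U *ᵥ w) μw = μw) :
    let X : Matrix (Fin (m * d)) (Fin d) ℝ :=
      Matrix.of fun (p : Fin (m * d)) (j : Fin d) =>
        Real.sqrt d * V ⟨(p : ℕ) % d, Nat.mod_lt _ hd⟩ j
    let μξ : Measure (Fin (m * d) → ℝ) := Measure.pi fun _ => gaussianReal 0 (σ ^ 2)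
    let wRR : (Fin d → ℝ) × (Fin (m * d) → ℝ) → Fin d → ℝ := fun p =>
      ((Xᵀ * X + ((σ : ℝ) ^ 2 * d) • (1 : Matrix (Fin d) (Fin d) ℝ))⁻¹ * Xᵀ) *ᵥ
        (X *ᵥ p.1 + p.2)
    (∫ p, (∑ i, (wRR p i - p.1 i) ^ 2) ∂(μw.prod μξ)) = (σ : ℝ) ^ 2 / (m + (σ : ℝ) ^ 2) :=
  ridge_regression_exact_risk_general d m hd hm σ V hV μw hsphere
end

section
/- In the batch EG± algorithm with v₁⁺ = v₁⁻ = (1/(2d))·𝟏 and w₁ = 0, suppose the (normalized) gradient at the first step equals ∇L(w₁) = 2(w₁ − e₁ − ζ) for some vector ζ ∈ ℝ^d, so that after one update with learning rate η the weights are v_{2,i}^± = exp(±2η(δ_{1i} + ζ_i))/Z₂ with Z₂ = Σ_{i=1}^d [exp(2η(δ_{1i} + ζ_i)) + exp(−2η(δ_{1i} + ζ_i))]. If |ζ_i| ≤ 1/4 for all i = 1,…,d, then v_{2,1}⁺ ≥ 1/(1 + (2d−1)e^{−η}), v_{2,1}⁻ ≤ e^{−2η}, and consequently the error satisfies e(w₂)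 ≤ 2(1 − v_{2,1}⁺ + v_{2,1}⁻) ≤ 2d·e^{−η}. -/
/-!
Write `aᵢ = 2η(δ₁ᵢ + ζᵢ)`, so that `Z₂ = ∑ᵢ (exp aᵢ + exp (-aᵢ))`. The noise bound separates
the first coordinate: `a₁ ≥ 3η/2` while `|aᵢ| ≤ η/2` for `i ≠ 1`. Hence each of the `2d - 1`
terms of `Z₂` other than `exp a₁` is at most `e^{-η} exp a₁`, which bounds `v₂₁⁺`; likewise
`exp (-a₁) ≤ e^{-2η} exp a₁` bounds `v₂₁⁻`.
For the error, a coordinate `i ≠ 1` contributes `(v₂ᵢ⁺ - v₂ᵢ⁻)² ≤ v₂ᵢ⁺ + v₂ᵢ⁻`, and these sum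
to `1 - v₂₁⁺ - v₂₁⁻`. The last bound, `2 exp (-a₁) + ∑_{i ≠ 1} 2 cosh aᵢ ≤ d e^{-η} Z₂`, is
checked term by term, using `cosh aᵢ ≤ cosh (η/2)`.
-/

open Real Finset

namespace EGpm

lemma exp_le_exp_neg_mul_exp {b c η : ℝ} (h : b ≤ c - η) : exp b ≤ exp (-η) * exp c := by
  rw [← exp_add]
  exact exp_le_exp.2 (by linarith)

lemma exp_add_exp_neg_mul_one_sub_le {x η : ℝ} (hη : 0 ≤ η) (hx : |x| ≤ η / 2) :
    (exp x + exp (-x)) * (1 - exp (-η)) ≤ exp (η / 2) := by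
  have hcosh : exp x + exp (-x) ≤ exp (η / 2) + exp (-(η / 2)) := by
    have := cosh_le_cosh.2 (hx.trans (le_abs_self _))
    rw [cosh_eq, cosh_eq] at this
    linarith
  have hshift : exp (η / 2) * exp (-η) = exp (-(η / 2)) := by
    rw [← exp_add]
    ring_nf
  have hx1 : 0 ≤ 1 - exp (-η) := sub_nonneg.2 (exp_le_one_iff.2 (by linarith))
  calc (exp x + exp (-x)) * (1 - exp (-η))
      ≤ (exp (η / 2) + exp (-(η / 2))) * (1 - exp (-η)) := mul_le_mul_of_nonneg_right hcosh hx1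
    _ = exp (η / 2) - exp (-(η / 2)) * exp (-η) := by linear_combination (-1 : ℝ) * hshift
    _ ≤ exp (η / 2) := by linarith [mul_pos (exp_pos (-(η / 2))) (exp_pos (-η))]

lemma two_mul_exp_neg_le {c η : ℝ} (hη : 0 ≤ η) (hc : 3 * η / 2 ≤ c) :
    2 * exp (-c) ≤ exp (-η) * (exp c + exp (-c)) := by
  have hshift : exp (2 * η) * exp (-c) ≤ exp (-η) * exp c := by
    rw [← exp_add, ← exp_add]
    exact exp_le_exp.2 (by linarith)
  have hsum : 2 ≤ exp (2 * η) + exp (-η) := by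
    linarith [add_one_le_exp (2 * η), add_one_le_exp (-η)]
  nlinarith [exp_pos (-c)]

variable {ι : Type*} [Fintype ι]

noncomputable def normalizer (a : ι → ℝ) : ℝ := ∑ i, (exp (a i) + exp (-a i))

lemma normalizer_pos [Nonempty ι] (a : ι → ℝ) : 0 < normalizer a :=
  sum_pos (fun i _ => by positivity) univ_nonempty

lemma sum_exp_div_normalizer [Nonempty ι] (a : ι → ℝ) :
    ∑ i, (exp (a i) / normalizer a + exp (-a i) / normalizer a) = 1 := by
  simp_rw [← add_div, ← sum_div]
  exact div_self (normalizer_pos a).ne'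

lemma exp_add_exp_neg_le_normalizer (a : ι → ℝ) (i₀ : ι) :
    exp (a i₀) + exp (-a i₀) ≤ normalizer a :=
  single_le_sum (f := fun i => exp (a i) + exp (-a i)) (fun i _ => by positivity) (mem_univ i₀)

lemma exp_neg_div_normalizer_le {η : ℝ} {a : ι → ℝ} {i₀ : ι} (hη : 0 ≤ η)
    (h₀ : 3 * η / 2 ≤ a i₀) :
    exp (-a i₀) / normalizer a ≤ exp (-(2 * η)) := by
  have : Nonempty ι := ⟨i₀⟩
  rw [div_le_iff₀ (normalizer_pos a)]
  calc exp (-a i₀) ≤ exp (-(2 * η)) * exp (a i₀) := exp_le_exp_neg_mul_exp (by linarith)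
    _ ≤ exp (-(2 * η)) * normalizer a := by
      gcongr
      linarith [exp_add_exp_neg_le_normalizer a i₀, exp_pos (-a i₀)]

variable [DecidableEq ι]

lemma sum_sq_sub_single_le {p m : ι → ℝ} (hp : ∀ i, 0 ≤ p i) (hm : ∀ i, 0 ≤ m i)
    (hsum : ∑ i, (p i + m i) = 1) (i₀ : ι) :
    ∑ i, (p i - m i - (Pi.single i₀ 1 : ι → ℝ) i) ^ 2 ≤ 2 * (1 - p i₀ + m i₀) := by
  have hle : ∀ i, p i + m i ≤ 1 := fun i =>
    hsum ▸ single_le_sum (fun j _ => add_nonneg (hp j) (hm j)) (mem_univ i)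
  have hsq : ∀ i, (p i - m i) ^ 2 ≤ p i + m i := fun i => by
    nlinarith [mul_nonneg (hp i) (hm i),
      mul_nonneg (add_nonneg (hp i) (hm i)) (sub_nonneg.2 (hle i))]
  have hrest : ∑ i ∈ {i₀}ᶜ, (p i - m i - (Pi.single i₀ 1 : ι → ℝ) i) ^ 2 ≤
      ∑ i ∈ {i₀}ᶜ, (p i + m i) :=
    sum_le_sum fun i hi => by
      rw [Pi.single_eq_of_ne (by simpa using hi), sub_zero]
      exact hsq i
  rw [Fintype.sum_eq_add_sum_compl i₀] at hsum ⊢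
  rw [Pi.single_eq_same]
  have := hle i₀
  nlinarith [mul_nonneg (hp i₀) (by linarith [hm i₀] : 0 ≤ 1 - p i₀),
    mul_nonneg (hm i₀) (by linarith [hp i₀] : 0 ≤ 1 + 2 * p i₀ - m i₀)]

lemma normalizer_eq_add_sum_compl (a : ι → ℝ) (i₀ : ι) :
    normalizer a = exp (a i₀) + exp (-a i₀) + ∑ i ∈ {i₀}ᶜ, (exp (a i) + exp (-a i)) :=
  Fintype.sum_eq_add_sum_compl i₀ _

lemma card_compl_singleton_add_one (i₀ : ι) :
    ((#{i₀}ᶜ : ℕ) : ℝ) + 1 = Fintype.card ι := by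
  exact_mod_cast card_compl_add_card {i₀}

section Separated

variable {η : ℝ} {a : ι → ℝ} {i₀ : ι}

lemma sum_compl_exp_add_exp_neg_le (h₀ : 3 * η / 2 ≤ a i₀) (ha : ∀ i ≠ i₀, |a i| ≤ η / 2) :
    ∑ i ∈ {i₀}ᶜ, (exp (a i) + exp (-a i)) ≤ #{i₀}ᶜ * (2 * (exp (-η) * exp (a i₀))) := by
  rw [← nsmul_eq_mul]
  refine sum_le_card_nsmul _ _ _ fun i hi => ?_
  obtain ⟨hlo, hhi⟩ := abs_le.1 (ha i (by simpa using hi))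
  linarith [exp_le_exp_neg_mul_exp (b := a i) (c := a i₀) (η := η) (by linarith),
    exp_le_exp_neg_mul_exp (b := -a i) (c := a i₀) (η := η) (by linarith)]

lemma sum_compl_exp_add_exp_neg_mul_one_sub_le (hη : 0 ≤ η) (h₀ : 3 * η / 2 ≤ a i₀)
    (ha : ∀ i ≠ i₀, |a i| ≤ η / 2) :
    (∑ i ∈ {i₀}ᶜ, (exp (a i) + exp (-a i))) * (1 - exp (-η)) ≤
      #{i₀}ᶜ * (exp (-η) * exp (a i₀)) := by
  rw [sum_mul, ← nsmul_eq_mul]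
  refine sum_le_card_nsmul _ _ _ fun i hi => ?_
  exact (exp_add_exp_neg_mul_one_sub_le hη (ha i (by simpa using hi))).trans
    (exp_le_exp_neg_mul_exp (by linarith))

lemma normalizer_le_exp_mul (hη : 0 ≤ η) (h₀ : 3 * η / 2 ≤ a i₀) (ha : ∀ i ≠ i₀, |a i| ≤ η / 2) :
    normalizer a ≤ exp (a i₀) * (1 + (2 * Fintype.card ι - 1) * exp (-η)) := by
  have hB : exp (-a i₀) ≤ exp (-η) * exp (a i₀) := exp_le_exp_neg_mul_exp (by linarith)
  rw [normalizer_eq_add_sum_compl a i₀, ← card_compl_singleton_add_one i₀]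
  linarith [sum_compl_exp_add_exp_neg_le h₀ ha]

lemma one_div_le_exp_div_normalizer (hη : 0 ≤ η) (h₀ : 3 * η / 2 ≤ a i₀)
    (ha : ∀ i ≠ i₀, |a i| ≤ η / 2) :
    1 / (1 + (2 * Fintype.card ι - 1) * exp (-η)) ≤ exp (a i₀) / normalizer a := by
  have : Nonempty ι := ⟨i₀⟩
  have hcard : (1 : ℝ) ≤ Fintype.card ι := by exact_mod_cast Fintype.card_pos
  rw [div_le_div_iff₀ (by nlinarith [exp_pos (-η)]) (normalizer_pos a), one_mul]
  exact normalizer_le_exp_mul hη h₀ ha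

lemma one_sub_exp_div_normalizer_add_le (hη : 0 ≤ η) (h₀ : 3 * η / 2 ≤ a i₀) (ha : ∀ i ≠ i₀, |a i| ≤ η / 2) :
    1 - exp (a i₀) / normalizer a + exp (-a i₀) / normalizer a ≤
      Fintype.card ι * exp (-η) := by
  have : Nonempty ι := ⟨i₀⟩
  have hZ := normalizer_pos a
  set S := ∑ i ∈ {i₀}ᶜ, (exp (a i) + exp (-a i))
  have hS : 0 ≤ S := sum_nonneg fun i _ => by positivity
  have hkey : 2 * exp (-a i₀) + S ≤ Fintype.card ι * exp (-η) * normalizer a := by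
    rw [normalizer_eq_add_sum_compl a i₀, ← card_compl_singleton_add_one i₀]
    have hrest : 0 ≤ (#{i₀}ᶜ : ℝ) * (exp (-η) * (exp (-a i₀) + S)) := by positivity
    linarith [two_mul_exp_neg_le hη h₀, sum_compl_exp_add_exp_neg_mul_one_sub_le hη h₀ ha]
  calc 1 - exp (a i₀) / normalizer a + exp (-a i₀) / normalizer a
      = (2 * exp (-a i₀) + S) / normalizer a := by
        rw [normalizer_eq_add_sum_compl a i₀]
        field_simp
        ring
    _ ≤ Fintype.card ι * exp (-η) := by
        rwa [div_le_iff₀ hZ]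

end Separated

end EGpm

open EGpm

/-- **One step of batch EG± under bounded noise.**  In the batch EG± algorithm with
`v₁⁺ = v₁⁻ = (1/(2d))·𝟏` and `w₁ = 0`, suppose the gradient at the first step is
`∇L(w₁) = 2(w₁ - e₁ - ζ)`, so that after one update with learning rate `η ≥ 0` the weights
are `v₂ᵢ± = exp(±2η(δ_{1i} + ζᵢ))/Z₂` with
`Z₂ = ∑ᵢ [exp(2η(δ_{1i} + ζᵢ)) + exp(-2η(δ_{1i} + ζᵢ))]`.  If `|ζᵢ| ≤ 1/4` for all `i`,
then `v₂₁⁺ ≥ 1/(1 + (2d-1)e^{-η})`, `v₂₁⁻ ≤ e^{-2η}`, and the error satisfies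
`e(w₂) ≤ 2(1 - v₂₁⁺ + v₂₁⁻) ≤ 2d·e^{-η}`, where `e(ŵ) = ‖ŵ - e₁‖²`. -/
theorem eg_pm_one_step (d : ℕ) (hd : 0 < d) (η : ℝ) (hη : 0 ≤ η) (ζ : Fin d → ℝ)
    (hζ : ∀ i, |ζ i| ≤ 1 / 4) :
    let e1 : Fin d → ℝ := fun i => if (i : ℕ) = 0 then 1 else 0
    let Z2 : ℝ := ∑ i, (Real.exp (2 * η * (e1 i + ζ i)) + Real.exp (-(2 * η * (e1 i + ζ i))))
    let v2p : Fin d → ℝ := fun i => Real.exp (2 * η * (e1 i + ζ i)) / Z2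
    let v2m : Fin d → ℝ := fun i => Real.exp (-(2 * η * (e1 i + ζ i))) / Z2
    let w2 : Fin d → ℝ := fun i => v2p i - v2m i
    v2p ⟨0, hd⟩ ≥ 1 / (1 + (2 * (d : ℝ) - 1) * Real.exp (-η)) ∧
    v2m ⟨0, hd⟩ ≤ Real.exp (-(2 * η)) ∧
    (∑ i, (w2 i - e1 i) ^ 2) ≤ 2 * (1 - v2p ⟨0, hd⟩ + v2m ⟨0, hd⟩) ∧
    2 * (1 - v2p ⟨0, hd⟩ + v2m ⟨0, hd⟩) ≤ 2 * (d : ℝ) * Real.exp (-η) := by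
  intro e1 Z2 v2p v2m w2
  have he1 : e1 = Pi.single ⟨0, hd⟩ 1 := by
    funext i
    simp [e1, Pi.single_apply, Fin.ext_iff]
  let a : Fin d → ℝ := fun i => 2 * η * (e1 i + ζ i)
  have ha₀ : 3 * η / 2 ≤ a ⟨0, hd⟩ := by
    simp only [a, he1, Pi.single_eq_same]
    nlinarith [(abs_le.1 (hζ ⟨0, hd⟩)).1]
  have ha : ∀ i ≠ ⟨0, hd⟩, |a i| ≤ η / 2 := fun i hi => by
    simp only [a, he1, Pi.single_eq_of_ne hi, zero_add, abs_mul,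
      abs_of_nonneg (by positivity : 0 ≤ 2 * η)]
    nlinarith [hζ i]
  have : Nonempty (Fin d) := ⟨⟨0, hd⟩⟩
  have hp : ∀ i, 0 ≤ v2p i := fun i => (div_pos (exp_pos _) (normalizer_pos a)).le
  have hm : ∀ i, 0 ≤ v2m i := fun i => (div_pos (exp_pos _) (normalizer_pos a)).le
  have hp₀ : v2p ⟨0, hd⟩ ≥ 1 / (1 + (2 * (d : ℝ) - 1) * exp (-η)) := by
    have h := one_div_le_exp_div_normalizer hη ha₀ ha
    rwa [Fintype.card_fin] at h
  have herr : 1 - v2p ⟨0, hd⟩ + v2m ⟨0, hd⟩ ≤ d * exp (-η) := by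
    have h := one_sub_exp_div_normalizer_add_le hη ha₀ ha
    rwa [Fintype.card_fin] at h
  refine ⟨hp₀, exp_neg_div_normalizer_le hη ha₀, ?_, by linarith only [herr]⟩
  rw [he1]
  exact sum_sq_sub_single_le hp hm (sum_exp_div_normalizer a) _
end

section
/- Let L: ℝ^d → ℝ be differentiable and let u: ℝ → ℝ^d satisfy the gradient-flow equation u̇(t) = −∇_u [L(u(t)²/4)], where the square is taken componentwise (i.e., gradient flow on L after the componentwise reparameterization w = û²/4, equivalently û = 2√w). Then w(t) = u(t)²/4 (componentwise) satisfies the continuous-time unnormalized exponentiated gradient (EGU) equation ẇ_i(t) = −w_i(t)·(∇L(w(t)))_i for every coordinate i. -/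
/-!
For a componentwise reparameterization `w = φ(u)`, the chain rule gives
`∂ᵢ(L ∘ φ)(u) = φ'(uᵢ) · ∂ᵢL(w)`, so along the gradient flow in `u` each `wᵢ = φ(uᵢ)` moves with
velocity `φ'(uᵢ) · u̇ᵢ = -φ'(uᵢ)² · ∂ᵢL(w)`. For `φ(x) = x²/4` one has `φ'(x)² = (x/2)² = φ(x)`,
which is exactly the EGU preconditioner `Diag(w)`.
-/

open ContinuousLinearMap

variable {𝕜 : Type*} [NontriviallyNormedField 𝕜] {ι : Type*} [Fintype ι]
  {F : Type*} [NormedAddCommGroup F] [NormedSpace 𝕜 F]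

theorem hasFDerivAt_pi_map {φ φ' : 𝕜 → 𝕜} {x : ι → 𝕜} (hφ : ∀ j, HasDerivAt φ (φ' (x j)) (x j)) :
    HasFDerivAt (fun y : ι → 𝕜 => fun j => φ (y j))
      (pi fun j => φ' (x j) • (proj j : (ι → 𝕜) →L[𝕜] 𝕜)) x :=
  hasFDerivAt_pi.2 fun j => (hφ j).comp_hasFDerivAt x (hasFDerivAt_apply j x)

theorem fderiv_comp_pi_map_single [DecidableEq ι] {L : (ι → 𝕜) → F} {φ φ' : 𝕜 → 𝕜}
    {x : ι → 𝕜} (hφ : ∀ j, HasDerivAt φ (φ' (x j)) (x j))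
    (hL : DifferentiableAt 𝕜 L fun j => φ (x j)) (i : ι) :
    fderiv 𝕜 (fun y : ι → 𝕜 => L fun j => φ (y j)) x (Pi.single i 1) =
      φ' (x i) • fderiv 𝕜 L (fun j => φ (x j)) (Pi.single i 1) := by
  have hcomp := hL.hasFDerivAt.comp x (hasFDerivAt_pi_map hφ)
  have hsingle : (pi fun j => φ' (x j) • (proj j : (ι → 𝕜) →L[𝕜] 𝕜)) (Pi.single i 1) =
      φ' (x i) • (Pi.single i 1 : ι → 𝕜) := by
    ext j
    rcases eq_or_ne j i with rfl | hji <;> simp [*]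
  rw [Function.comp_def] at hcomp
  rw [hcomp.fderiv, comp_apply, hsingle, map_smul]

theorem hasDerivAt_pi_map_of_gradient_flow [DecidableEq ι] {L : (ι → 𝕜) → 𝕜} {φ φ' : 𝕜 → 𝕜}
    {u : 𝕜 → ι → 𝕜} {t : 𝕜} (hφ : ∀ j, HasDerivAt φ (φ' (u t j)) (u t j))
    (hL : DifferentiableAt 𝕜 L fun j => φ (u t j)) (i : ι)
    (hu : HasDerivAt (fun s => u s i)
      (-fderiv 𝕜 (fun y : ι → 𝕜 => L fun j => φ (y j)) (u t) (Pi.single i 1)) t) :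
    HasDerivAt (fun s => φ (u s i))
      (-(φ' (u t i) ^ 2) * fderiv 𝕜 L (fun j => φ (u t j)) (Pi.single i 1)) t := by
  rw [fderiv_comp_pi_map_single hφ hL, smul_eq_mul] at hu
  exact ((hφ i).comp t hu).congr_deriv (by ring)

/-- **Gradient flow on the reparameterization `w = u²/4` is continuous-time EGU.**  Let
`L : ℝ^d → ℝ` be differentiable and let `u : ℝ → ℝ^d` satisfy the gradient-flow equation
`u̇ᵢ(t) = -∂/∂uᵢ [L(u(t)²/4)]` in every coordinate (partial derivatives are written as the
Fréchet derivative applied to the basis vector `Pi.single i 1`).  Then `w(t) = u(t)²/4`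
(componentwise) satisfies the continuous-time unnormalized exponentiated gradient equation
`ẇᵢ(t) = -wᵢ(t) * (∇L(w(t)))ᵢ` for every coordinate `i`. -/
theorem reparam_sq_gradient_flow_is_egu (d : ℕ) (L : (Fin d → ℝ) → ℝ)
    (hL : Differentiable ℝ L) (u : ℝ → Fin d → ℝ)
    (hu : ∀ (t : ℝ) (i : Fin d),
      HasDerivAt (fun s => u s i)
        (-(fderiv ℝ (fun x : Fin d → ℝ => L fun j => (x j) ^ 2 / 4) (u t)) (Pi.single i 1)) t) :
    ∀ (t : ℝ) (i : Fin d),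
      HasDerivAt (fun s => (u s i) ^ 2 / 4)
        (-((u t i) ^ 2 / 4) *
          (fderiv ℝ L fun j => (u t j) ^ 2 / 4) (Pi.single i 1)) t := by
  intro t i
  have hφ : ∀ x : ℝ, HasDerivAt (fun x => x ^ 2 / 4) (x / 2) x := fun x =>
    ((hasDerivAt_pow 2 x).div_const 4).congr_deriv (by ring)
  have hflow := hasDerivAt_pi_map_of_gradient_flow (φ' := (· / 2)) (fun j => hφ (u t j))
    (hL _) i (hu t i)
  exact hflow.congr_deriv (by ring)
end

section
/- Fix a real number a (the least-squares coordinate w^LS_i) and an initial value w₀ ≠ a. Let ξ = sign(w₀ − a) and define τ(t) = arsinh((1 + a·w₀)/(w₀ − a)) + 2t·ξ·√(a² + 1) and w(t) = (a·sinh τ(t) + 1)/(sinh τ(t) − a). Then on any interval containing 0 on which sinh τ(t) ≠ a, the function w is the solution of the continuous-time EGU± trajectory equation for the quadratic loss: w'(t) = 2·√(w(t)² + 1)·(a − w(t)), with w(0) = w₀. -/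
/-! The Möbius map `s ↦ (a s + 1)/(s - a)` is an involution; the substitution
`w = (a s + 1)/(s - a)` with `s = sinh τ` sends the gradient flow `w' = 2 √(w² + 1) (a - w)` to
`s' = 2 ξ √(a² + 1) √(s² + 1)` with `ξ` the sign of `s - a`, because
`w² + 1 = (a² + 1)(s² + 1)/(s - a)²` and `dw/ds = (a - w)/(s - a)`. In the variable `τ = arsinh s`
this is the linear motion `τ' = 2 ξ √(a² + 1)`. The sign of `s - a` is constant on the interval,
where `s - a` is continuous and nonzero, so it is read off at time `0`:
`s(0) - a = (a² + 1)/(w₀ - a)`. -/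

open Real

noncomputable def mobius (a s : ℝ) : ℝ := (a * s + 1) / (s - a)

section Mobius

variable {a s : ℝ}

theorem mobius_sub (h : s ≠ a) : mobius a s - a = (a ^ 2 + 1) / (s - a) := by
  have : s - a ≠ 0 := sub_ne_zero.2 h
  unfold mobius
  field_simp
  ring

theorem mobius_mobius (h : s ≠ a) : mobius a (mobius a s) = s := by
  have hs : s - a ≠ 0 := sub_ne_zero.2 h
  have ha : a ^ 2 + 1 ≠ 0 := by positivity
  rw [mobius, mobius_sub h]
  unfold mobius
  field_simp
  ring

theorem mobius_sq_add_one (h : s ≠ a) :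
    mobius a s ^ 2 + 1 = (a ^ 2 + 1) * (s ^ 2 + 1) / (s - a) ^ 2 := by
  have : s - a ≠ 0 := sub_ne_zero.2 h
  unfold mobius
  field_simp
  ring

theorem sqrt_mobius_sinh_sq_add_one {x : ℝ} (h : sinh x ≠ a) :
    √(mobius a (sinh x) ^ 2 + 1) = √(a ^ 2 + 1) * cosh x / |sinh x - a| := by
  rw [mobius_sq_add_one h, add_comm (sinh x ^ 2), ← cosh_sq', sqrt_div' _ (sq_nonneg _),
    sqrt_mul (by positivity), sqrt_sq (cosh_pos x).le, sqrt_sq_eq_abs]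

theorem HasDerivAt.mobius {f : ℝ → ℝ} {f' t : ℝ} (hf : HasDerivAt f f' t) (h : f t ≠ a) :
    HasDerivAt (fun t => mobius a (f t)) ((a - mobius a (f t)) * f' / (f t - a)) t := by
  have hd : f t - a ≠ 0 := sub_ne_zero.2 h
  refine (((hf.const_mul a).add_const 1).div (hf.sub_const a) hd).congr_deriv ?_
  simp only [_root_.mobius]
  field_simp

end Mobius

theorem IsPreconnected.pos_of_ne_zero {X : Type*} [TopologicalSpace X] {S : Set X}
    {f : X → ℝ} {x₀ x : X} (hS : IsPreconnected S) (hf : ContinuousOn f S)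
    (hne : ∀ y ∈ S, f y ≠ 0) (hx₀ : x₀ ∈ S) (hpos : 0 < f x₀) (hx : x ∈ S) : 0 < f x := by
  by_contra! hle
  obtain ⟨y, hy, hy0⟩ := hS.intermediate_value hx hx₀ hf ⟨hle, hpos.le⟩
  exact hne y hy hy0

theorem Real.sign_eq_div_abs_of_mul_pos {x y : ℝ} (h : 0 < x * y) : Real.sign y = x / |x| := by
  rcases pos_and_pos_or_neg_and_neg_of_mul_pos h with ⟨hx, hy⟩ | ⟨hx, hy⟩
  · rw [Real.sign_of_pos hy, abs_of_pos hx, div_self hx.ne']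
  · rw [Real.sign_of_neg hy, abs_of_neg hx, div_neg, div_self hx.ne]

/-- **EGU± trajectory.** Fix `a` (the least-squares coordinate `w^LS_i`) and an initial value
`w₀ ≠ a`.  Let `ξ = sign (w₀ - a)`, `τ t = arsinh ((1 + a*w₀)/(w₀ - a)) + 2*t*ξ*√(a²+1)` and
`w t = (a * sinh (τ t) + 1) / (sinh (τ t) - a)`.  Then on any interval `I` containing `0` on
which `sinh (τ t) ≠ a`, the function `w` is the solution of the continuous-time EGU±
trajectory equation `w' = 2 * √(w² + 1) * (a - w)` with `w 0 = w₀`. -/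
theorem egupm_trajectory (a w₀ : ℝ) (hw₀ : w₀ ≠ a) :
    let ξ : ℝ := Real.sign (w₀ - a)
    let τ : ℝ → ℝ := fun t =>
      Real.arsinh ((1 + a * w₀) / (w₀ - a)) + 2 * t * ξ * Real.sqrt (a ^ 2 + 1)
    let w : ℝ → ℝ := fun t => (a * Real.sinh (τ t) + 1) / (Real.sinh (τ t) - a)
    ∀ I : Set ℝ, I.OrdConnected → (0 : ℝ) ∈ I → (∀ s ∈ I, Real.sinh (τ s) ≠ a) →
      w 0 = w₀ ∧ ∀ t ∈ I, HasDerivAt w (2 * Real.sqrt ((w t) ^ 2 + 1) * (a - w t)) t := by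
  intro ξ τ w I hI h0 hne
  have hτ0 : sinh (τ 0) = mobius a w₀ := by simp [τ, mobius, add_comm]
  refine ⟨by simp only [w, hτ0]; exact mobius_mobius hw₀, fun t ht => ?_⟩
  have hτ : HasDerivAt τ (2 * ξ * √(a ^ 2 + 1)) t :=
    ((((hasDerivAt_id t).const_mul 2).mul_const ξ).mul_const _).const_add _
      |>.congr_deriv (by ring)
  have hsign : ξ = (sinh (τ t) - a) / |sinh (τ t) - a| := by
    refine Real.sign_eq_div_abs_of_mul_pos (hI.isPreconnected.pos_of_ne_zero
      (f := fun t => (sinh (τ t) - a) * (w₀ - a)) (by fun_prop) ?_ h0 ?_ ht)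
    · exact fun s hs => mul_ne_zero (sub_ne_zero.2 (hne s hs)) (sub_ne_zero.2 hw₀)
    · simp only [hτ0, mobius_sub hw₀, div_mul_cancel₀ _ (sub_ne_zero.2 hw₀)]
      positivity
  refine hτ.sinh.mobius (hne t ht) |>.congr_deriv ?_
  have hd : sinh (τ t) - a ≠ 0 := sub_ne_zero.2 (hne t ht)
  have habs : |sinh (τ t) - a| ≠ 0 := abs_ne_zero.2 hd
  show _ = 2 * √(mobius a (sinh (τ t)) ^ 2 + 1) * (a - mobius a (sinh (τ t)))
  rw [sqrt_mobius_sinh_sq_add_one (hne t ht), hsign]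
  field_simp
end

section
/- Let X ∈ ℝ^{n×d}, y ∈ ℝ^n, λ > 0, and let W ∈ ℝ^{d×d} be an invertible diagonal matrix. Then W·(W·XᵀX·W + λ·I_d)⁻¹·W·Xᵀy = (XᵀX + λ·W^{−2})⁻¹·Xᵀy. Consequently, the priming predictor ŵ' = W·(X̃ᵀX̃ + λI_d)⁻¹X̃ᵀy with X̃ = XW equals the regularized least-squares solution ŵ' = argmin_{ŵ} { (1/2)·‖y − Xŵ‖² + (λ/2)·ŵᵀW^{−2}ŵ }. -/
/-!
With `A = XᵀX + λ W⁻²`, the matrix `W XᵀX W + λ I` factors as `W A W`, so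
`W (W XᵀX W + λ I)⁻¹ W = A⁻¹`. For symmetric invertible `W` the penalty `λ W⁻²` is positive
definite, hence so is `A`. Completing the square around the solution `w₀` of the normal equations
`A w₀ = Xᵀ y` gives `f w = f w₀ + ½ (w - w₀)ᵀ A (w - w₀)`, which exhibits `w₀` as the unique
minimizer of the objective `f`.
-/

open Matrix

theorem mul_inv_conj_add_smul_one_mul {n α : Type*} [Fintype n] [DecidableEq n] [CommRing α]
    {W : Matrix n n α} (hW : IsUnit W.det) (M : Matrix n n α) (c : α) :
    W * (W * M * W + c • 1)⁻¹ * W = (M + c • (W ^ 2)⁻¹)⁻¹ := by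
  have hWW : W * (W ^ 2)⁻¹ * W = 1 := by
    rw [sq, Matrix.mul_inv_rev, mul_nonsing_inv_cancel_left _ _ hW, nonsing_inv_mul _ hW]
  have hfactor : W * M * W + c • 1 = W * (M + c • (W ^ 2)⁻¹) * W := by
    rw [Matrix.mul_add, Matrix.add_mul, Matrix.mul_smul, Matrix.smul_mul, hWW]
  rw [hfactor, Matrix.mul_inv_rev, Matrix.mul_inv_rev, mul_nonsing_inv_cancel_left _ _ hW,
    nonsing_inv_mul_cancel_right _ _ hW]

theorem posDef_inv_sq_of_isSymm {n : Type*} [Fintype n] [DecidableEq n] {W : Matrix n n ℝ}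
    (hWsymm : W.IsSymm) (hW : IsUnit W.det) : ((W ^ 2)⁻¹).PosDef := by
  have hsq : W ^ 2 = Wᴴ * W := by
    rw [conjTranspose_eq_transpose_of_trivial, hWsymm.eq, sq]
  rw [hsq]
  exact (PosDef.conjTranspose_mul_self W
    (mulVec_injective_of_isUnit ((isUnit_iff_isUnit_det W).mpr hW))).inv

section RegularizedLeastSquares

variable {m n : Type*} [Fintype m] [Fintype n]

noncomputable def regularizedSquaredError (X : Matrix m n ℝ) (y : m → ℝ) (R : Matrix n n ℝ)
    (w : n → ℝ) : ℝ :=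
  (1 / 2) * ((y - X *ᵥ w) ⬝ᵥ (y - X *ᵥ w)) + (1 / 2) * (w ⬝ᵥ (R *ᵥ w))

theorem regularizedSquaredError_eq_add_quadForm {X : Matrix m n ℝ} {y : m → ℝ}
    {R : Matrix n n ℝ} (hR : R.IsSymm) {w₀ : n → ℝ} (hw₀ : (Xᵀ * X + R) *ᵥ w₀ = Xᵀ *ᵥ y)
    (w : n → ℝ) :
    regularizedSquaredError X y R w =
      regularizedSquaredError X y R w₀ + (1 / 2) * ((w - w₀) ⬝ᵥ ((Xᵀ * X + R) *ᵥ (w - w₀))) := by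
  obtain ⟨u, rfl⟩ : ∃ u, w = w₀ + u := ⟨w - w₀, by abel⟩
  have hXt : ∀ v, u ⬝ᵥ (Xᵀ *ᵥ v) = (X *ᵥ u) ⬝ᵥ v := fun v => by
    rw [dotProduct_mulVec, vecMul_transpose]
  have hRsymm : w₀ ⬝ᵥ (R *ᵥ u) = u ⬝ᵥ (R *ᵥ w₀) := by
    rw [dotProduct_mulVec, ← vecMul_transpose, hR.eq, dotProduct_comm]
  -- the normal equations, tested against `u`, make the cross terms cancel
  have hcross : (X *ᵥ u) ⬝ᵥ (X *ᵥ w₀) + u ⬝ᵥ (R *ᵥ w₀) = y ⬝ᵥ (X *ᵥ u) := by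
    rw [← hXt, dotProduct_comm y, ← hXt, ← dotProduct_add, mulVec_mulVec, ← add_mulVec, hw₀]
  simp only [regularizedSquaredError, add_sub_cancel_left, add_mulVec, mulVec_add,
    sub_add_eq_sub_sub, dotProduct_add, add_dotProduct, dotProduct_sub, sub_dotProduct,
    ← mulVec_mulVec, hXt, hRsymm]
  rw [dotProduct_comm (X *ᵥ u) y, dotProduct_comm (X *ᵥ w₀) (X *ᵥ u)]
  linear_combination hcross

theorem regularizedSquaredError_unique_min [DecidableEq n] {X : Matrix m n ℝ} (y : m → ℝ)
    {R : Matrix n n ℝ} (hR : R.IsSymm) (hA : (Xᵀ * X + R).PosDef) :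
    (∀ w, regularizedSquaredError X y R (((Xᵀ * X + R)⁻¹ * Xᵀ) *ᵥ y) ≤
        regularizedSquaredError X y R w) ∧
      ∀ w, regularizedSquaredError X y R w =
          regularizedSquaredError X y R (((Xᵀ * X + R)⁻¹ * Xᵀ) *ᵥ y) →
        w = ((Xᵀ * X + R)⁻¹ * Xᵀ) *ᵥ y := by
  have hnormal : (Xᵀ * X + R) *ᵥ (((Xᵀ * X + R)⁻¹ * Xᵀ) *ᵥ y) = Xᵀ *ᵥ y := by
    rw [mulVec_mulVec, mul_nonsing_inv_cancel_left _ _ ((isUnit_iff_isUnit_det _).mp hA.isUnit)]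
  have hsplit := regularizedSquaredError_eq_add_quadForm (y := y) hR hnormal
  refine ⟨fun w => ?_, fun w hw => ?_⟩
  · have := hA.posSemidef.dotProduct_mulVec_nonneg (w - ((Xᵀ * X + R)⁻¹ * Xᵀ) *ᵥ y)
    rw [star_trivial] at this
    linarith [hsplit w]
  · by_contra hne
    have := hA.dotProduct_mulVec_pos (sub_ne_zero_of_ne hne)
    rw [star_trivial] at this
    linarith [hsplit w]

end RegularizedLeastSquares

/-- **The priming predictor is a regularized least-squares solution.**  Let `X ∈ ℝ^{n×d}`,
`y ∈ ℝ^n`, `λ > 0`, and let `W ∈ ℝ^{d×d}` be an invertible diagonal matrix.  Then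
`W (W XᵀX W + λ I)⁻¹ W Xᵀ y = (XᵀX + λ W⁻²)⁻¹ Xᵀ y`, and this vector is the unique minimizer
of the regularized objective `w ↦ (1/2)‖y - Xw‖² + (λ/2) wᵀ W⁻² w`. -/
theorem priming_is_regularized_least_squares (n d : ℕ)
    (X : Matrix (Fin n) (Fin d) ℝ) (y : Fin n → ℝ) (lam : ℝ) (hlam : 0 < lam)
    (W : Matrix (Fin d) (Fin d) ℝ) (hWdiag : W.IsDiag) (hWinv : IsUnit W.det) :
    let w' : Fin d → ℝ :=
      (W * (W * (Xᵀ * X) * W + lam • (1 : Matrix (Fin d) (Fin d) ℝ))⁻¹ * W * Xᵀ) *ᵥ y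
    let f : (Fin d → ℝ) → ℝ := fun w =>
      (1 / 2) * (∑ i, (y i - (X *ᵥ w) i) ^ 2) + (lam / 2) * (w ⬝ᵥ ((W ^ 2)⁻¹ *ᵥ w))
    w' = ((Xᵀ * X + lam • (W ^ 2)⁻¹)⁻¹ * Xᵀ) *ᵥ y ∧
      (∀ w : Fin d → ℝ, f w' ≤ f w) ∧ (∀ w : Fin d → ℝ, f w = f w' → w = w') := by
  intro w' f
  have hpenalty : (lam • (W ^ 2)⁻¹).PosDef :=
    (posDef_inv_sq_of_isSymm hWdiag.isSymm hWinv).smul hlam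
  have hA : (Xᵀ * X + lam • (W ^ 2)⁻¹).PosDef := by
    simpa only [conjTranspose_eq_transpose_of_trivial] using
      PosDef.posSemidef_add (posSemidef_conjTranspose_mul_self X) hpenalty
  have hw' : w' = ((Xᵀ * X + lam • (W ^ 2)⁻¹)⁻¹ * Xᵀ) *ᵥ y := by
    simp only [w', mul_inv_conj_add_smul_one_mul hWinv]
  have hf : f = regularizedSquaredError X y (lam • (W ^ 2)⁻¹) := by
    funext w
    simp only [f, regularizedSquaredError, smul_mulVec, dotProduct_smul, smul_eq_mul]
    simp only [dotProduct, Pi.sub_apply, sq]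
    ring
  rw [hf, hw']
  exact ⟨rfl, regularizedSquaredError_unique_min y ((hWdiag.isSymm.pow 2).inv.smul lam) hA⟩
end
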